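/- arXiv:2603.14262 — 2 statements merged into one kernel-verified Lean document; each statement's English description precedes it below -/
import Mathlib

section
/- Let m ≥ 1 and let H_m = Σ_{i=1}^m 1/i be the m-th harmonic number. In the unique expansion ((x−1)^{\underline{m}})^3 = a_{3,0,m}(x−1)^{\underline{m}} + Σ_{l,r} a_{3,l,r}((x)^{\underline{m+1}})^l(x+r−m−1)^{\underline{r}}, one has a_{3,1,m−1} = (−1)^m·m! and a_{3,1,m} = (−1)^{m−1}·m!·H_m. -/
/-
Since `x^{(m+1)̲} = x · P` with `P = (x-1)^{m̲}`, dividing the expansion by `P` gives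
`P² = a₀ + x S + x² P U`, where `S = ∑_r a_{3,1,r} (x+r-m-1)^{r̲}` has degree at most `m`.
Writing `P = c₀ + c₁ x + x² V`, one has `P² - c₀² - x (c₁ P + c₀ W) = x² P V` with
`W = (P - c₀)/x`; hence `x P` divides `S - c₁ P - c₀ W`, which has degree at most `m`, so
`S = c₁ P + c₀ W`. The top basis polynomial of `S` is `P` itself, so comparing the coefficients
of `x^m` and `x^{m-1}` gives `a_{3,1,m} = c₁ = P'(0)` and `a_{3,1,m-1} = c₀ = P(0)`; finally
`P(0) = (-1)^m m!` and `P'(0) = -P(0) H_m`.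
-/

open Polynomial

/-- The falling factorial `(p)^{\underline{s}} = p (p-1) ⋯ (p-s+1)` of a polynomial `p`. -/
noncomputable def ffall (p : Polynomial ℝ) (s : ℕ) : Polynomial ℝ :=
  ∏ j ∈ Finset.range s, (p - (j : Polynomial ℝ))

open Finset

theorem exists_sum_Icc_pow_mul {R : Type*} [CommSemiring R] (Q : R) (g : ℕ → R) {L : ℕ}
    (hL : 1 ≤ L) :
    ∃ U, ∑ l ∈ Icc 1 L, Q ^ l * g l = Q * g 1 + Q ^ 2 * U := by
  refine ⟨∑ l ∈ Ioc 1 L, Q ^ (l - 2) * g l, ?_⟩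
  rw [← add_sum_Ioc_eq_sum_Icc hL, pow_one, mul_sum]
  congr 1
  refine sum_congr rfl fun l hl => ?_
  rw [← mul_assoc, ← pow_add, Nat.add_sub_cancel' (mem_Ioc.1 hl).1]

section CommRing

variable {R : Type*} [CommRing R]

theorem sq_sub_coeff_zero_sq (P : R[X]) :
    P ^ 2 - C (P.coeff 0 ^ 2) - X * (C (P.coeff 1) * P + C (P.coeff 0) * divX P) =
      X ^ 2 * P * divX (divX P) := by
  have hP := divX_mul_X_add P
  have hW := divX_mul_X_add (divX P)
  rw [coeff_divX, zero_add] at hW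
  rw [C_pow]
  linear_combination (-(P + C (P.coeff 0))) * hP - P * X * hW

section Basis

variable (B : ℕ → R[X]) (hBdeg : ∀ r, (B r).natDegree = r) (b : ℕ → R)
include hBdeg

theorem natDegree_sum_C_mul_le (n : ℕ) :
    (∑ r ∈ range (n + 1), C (b r) * B r).natDegree ≤ n :=
  natDegree_sum_le_of_forall_le _ _ fun r hr =>
    (natDegree_C_mul_le _ _).trans ((hBdeg r).trans_le (Nat.lt_succ_iff.1 (mem_range.1 hr)))

theorem coeff_sum_C_mul_of_le {n k : ℕ} (hnk : n ≤ k) :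
    (∑ r ∈ range n, C (b r) * B r).coeff k = 0 := by
  rw [finsetSum_coeff]
  refine sum_eq_zero fun r hr => ?_
  rw [coeff_C_mul, coeff_eq_zero_of_natDegree_lt, mul_zero]
  rw [hBdeg]; exact (mem_range.1 hr).trans_le hnk

variable (hB : ∀ r, (B r).Monic)
include hB

theorem coeff_self_eq_one (n : ℕ) : (B n).coeff n = 1 := by
  have hlead := (hB n).coeff_natDegree
  rwa [hBdeg] at hlead

theorem coeff_sum_C_mul_self (n : ℕ) :
    (∑ r ∈ range (n + 1), C (b r) * B r).coeff n = b n := by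
  rw [sum_range_succ, coeff_add, coeff_sum_C_mul_of_le B hBdeg b le_rfl, coeff_C_mul,
    coeff_self_eq_one B hBdeg hB, zero_add, mul_one]

theorem eq_coeff_of_sum_C_mul_eq {n : ℕ}
    (h : ∑ r ∈ range (n + 2), C (b r) * B r =
      C ((B (n + 1)).coeff 1) * B (n + 1) + C ((B (n + 1)).coeff 0) * divX (B (n + 1))) :
    b (n + 1) = (B (n + 1)).coeff 1 ∧ b n = (B (n + 1)).coeff 0 := by
  have hlead := coeff_self_eq_one B hBdeg hB (n + 1)
  have hnext : (B (n + 1)).coeff (n + 1 + 1) = 0 :=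
    coeff_eq_zero_of_natDegree_lt (by rw [hBdeg]; omega)
  have htop := congrArg (coeff · (n + 1)) h
  have hpred := congrArg (coeff · n) h
  simp only [coeff_add, coeff_C_mul, coeff_divX] at htop hpred
  rw [coeff_sum_C_mul_self B hBdeg b hB, hlead, hnext] at htop
  rw [sum_range_succ, coeff_add, coeff_sum_C_mul_self B hBdeg b hB, coeff_C_mul, hlead] at hpred
  exact ⟨by linear_combination htop, by linear_combination hpred - (B (n + 1)).coeff n * htop⟩

end Basis

end CommRing

theorem eq_of_sq_eq_C_add_X_mul {K : Type*} [CommRing K] [IsDomain K] {P S U : K[X]} {a₀ : K}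
    {m : ℕ} (hP : P ≠ 0) (hPdeg : P.natDegree = m) (hS : S.natDegree ≤ m)
    (h : P ^ 2 = C a₀ + X * S + X ^ 2 * P * U) :
    S = C (P.coeff 1) * P + C (P.coeff 0) * divX P := by
  have ha₀ : a₀ = P.coeff 0 ^ 2 := by
    simpa [sq, mul_coeff_zero] using (congrArg (coeff · 0) h).symm
  subst ha₀
  have hE : C (P.coeff 1) * P + C (P.coeff 0) * divX P - S =
      X * P * (U - divX (divX P)) := by
    refine mul_left_cancel₀ X_ne_zero ?_
    linear_combination h - sq_sub_coeff_zero_sq P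
  refine (sub_eq_zero.1 (eq_zero_of_dvd_of_natDegree_lt (Dvd.intro _ hE.symm) ?_)).symm
  rw [natDegree_mul X_ne_zero hP, natDegree_X, hPdeg, Nat.lt_one_add_iff]
  refine (natDegree_sub_le_of_le (natDegree_add_le_of_degree_le ?_ ?_) hS).trans (max_self m).le
  · exact (natDegree_C_mul_le _ _).trans hPdeg.le
  · exact (natDegree_C_mul_le _ _).trans (natDegree_divX_le.trans hPdeg.le)

theorem ffall_succ (p : ℝ[X]) (s : ℕ) : ffall p (s + 1) = ffall p s * (p - s) :=
  prod_range_succ _ _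

theorem monic_ffall_and_natDegree_eq {p : ℝ[X]} (hp : p.Monic) (hdeg : p.natDegree = 1)
    (s : ℕ) :
    (ffall p s).Monic ∧ (ffall p s).natDegree = s := by
  have hfac : ∀ j : ℕ, (p - j).Monic ∧ (p - j).natDegree = 1 := fun j => by
    have hj : (j : ℝ[X]).natDegree < p.natDegree := by rw [natDegree_natCast, hdeg]; exact one_pos
    exact ⟨hp.sub_of_left (degree_lt_degree hj),
      (natDegree_sub_eq_left_of_natDegree_lt hj).trans hdeg⟩
  refine ⟨monic_prod_of_monic _ _ fun j _ => (hfac j).1, ?_⟩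
  rw [ffall, natDegree_prod_of_monic _ _ fun j _ => (hfac j).1]
  simp [hfac]

theorem ffall_X_succ (m : ℕ) : ffall X (m + 1) = X * ffall (X - 1) m := by
  rw [ffall, prod_range_succ', mul_comm]
  simp only [ffall, Nat.cast_zero, sub_zero, Nat.cast_succ]
  congr 1
  exact prod_congr rfl fun j _ => by ring

theorem coeff_zero_ffall_X_sub_one (m : ℕ) :
    (ffall (X - 1) m).coeff 0 = (-1) ^ m * m.factorial := by
  induction m with
  | zero => simp [ffall]
  | succ m ih =>
    rw [ffall_succ, mul_coeff_zero, ih, Nat.factorial_succ]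
    simp only [coeff_sub, coeff_X_zero, coeff_one_zero, zero_sub, coeff_natCast_ite, ↓reduceIte,
      Nat.cast_mul, Nat.cast_add, Nat.cast_one]
    ring

theorem coeff_one_ffall_X_sub_one (m : ℕ) :
    (ffall (X - 1) m).coeff 1 = -(-1) ^ m * m.factorial * ∑ i ∈ Icc 1 m, (1 : ℝ) / i := by
  induction m with
  | zero => simp [ffall, coeff_one]
  | succ m ih =>
    have hfac : (X - 1 - (m : ℝ[X])) = X - C ((m : ℝ) + 1) := by
      simp only [map_add, map_natCast, map_one]; ring
    rw [ffall_succ, hfac, coeff_mul_X_sub_C, ih, coeff_zero_ffall_X_sub_one,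
      sum_Icc_succ_top (by omega), Nat.factorial_succ]
    push_cast
    field_simp
    ring

-- Newton basis for the nodes `m, m - 1, …, 0`: member `r` has roots `m - r + 1, …, m`.
noncomputable def newtonBasis (m r : ℕ) : ℝ[X] :=
  ffall (X + (r : ℝ[X]) - (m : ℝ[X]) - 1) r

theorem newtonBasis_monic_and_natDegree_eq (m r : ℕ) :
    (newtonBasis m r).Monic ∧ (newtonBasis m r).natDegree = r := by
  have hlin : X + (r : ℝ[X]) - (m : ℝ[X]) - 1 = X + C ((r : ℝ) - m - 1) := by
    simp only [map_sub, map_natCast, map_one]; ring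
  exact monic_ffall_and_natDegree_eq (hlin ▸ monic_X_add_C _) (hlin ▸ natDegree_X_add_C _) r

theorem newtonBasis_monic (m r : ℕ) : (newtonBasis m r).Monic :=
  (newtonBasis_monic_and_natDegree_eq m r).1

theorem natDegree_newtonBasis (m r : ℕ) : (newtonBasis m r).natDegree = r :=
  (newtonBasis_monic_and_natDegree_eq m r).2

theorem newtonBasis_self (m : ℕ) : newtonBasis m m = ffall (X - 1) m := by
  simp [newtonBasis]

theorem exists_sq_eq_of_expansion {m L : ℕ} (hL : 1 ≤ L) {a0 : ℝ} {a : ℕ → ℕ → ℝ}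
    (hexp : ffall (X - 1) m ^ 3 = C a0 * ffall (X - 1) m + ∑ l ∈ Icc 1 L,
      ∑ r ∈ range (m + 1), C (a l r) * ffall X (m + 1) ^ l * newtonBasis m r) :
    ∃ U, ffall (X - 1) m ^ 2 = C a0 + X * ∑ r ∈ range (m + 1), C (a 1 r) * newtonBasis m r +
      X ^ 2 * ffall (X - 1) m * U := by
  set P := ffall (X - 1) m
  obtain ⟨U, hU⟩ := exists_sum_Icc_pow_mul (X * P)
    (fun l => ∑ r ∈ range (m + 1), C (a l r) * newtonBasis m r) hL
  have hsum : ∑ l ∈ Icc 1 L, ∑ r ∈ range (m + 1),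
      C (a l r) * ffall X (m + 1) ^ l * newtonBasis m r =
      ∑ l ∈ Icc 1 L, (X * P) ^ l * ∑ r ∈ range (m + 1), C (a l r) * newtonBasis m r := by
    simp_rw [ffall_X_succ, mul_sum]
    exact sum_congr rfl fun l _ => sum_congr rfl fun r _ => by ring
  refine ⟨U, mul_left_cancel₀ (newtonBasis_self m ▸ newtonBasis_monic m m).ne_zero ?_⟩
  rw [hsum, hU] at hexp
  linear_combination hexp

/-- in the (unique) expansion
`((x-1)^{m̲})^3 = a_{3,0,m}(x-1)^{m̲} + ∑_{l=1}^{⌊3m/(m+1)⌋} ∑_{r=0}^{m} a_{3,l,r}((x)^{(m+1)̲})^l (x+r-m-1)^{r̲}`,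
we have `a_{3,1,m-1} = (-1)^m m!` and `a_{3,1,m} = (-1)^{m-1} m! H_m`,
where `H_m = ∑_{i=1}^m 1/i`. -/
theorem stmt8 (m : ℕ) (hm : 1 ≤ m) (a0 : ℝ) (a : ℕ → ℕ → ℝ)
    (hexp : ffall (X - 1) m ^ 3 =
      C a0 * ffall (X - 1) m +
        ∑ l ∈ Finset.Icc 1 (m * 3 / (m + 1)), ∑ r ∈ Finset.range (m + 1),
          C (a l r) * ffall X (m + 1) ^ l *
            ffall (X + (r : Polynomial ℝ) - (m : Polynomial ℝ) - 1) r) :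
    a 1 (m - 1) = (-1 : ℝ) ^ m * Nat.factorial m ∧
    a 1 m = (-1 : ℝ) ^ (m - 1) * Nat.factorial m * ∑ i ∈ Finset.Icc 1 m, (1 : ℝ) / i := by
  have hL : 1 ≤ m * 3 / (m + 1) := (Nat.le_div_iff_mul_le (by omega)).2 (by omega)
  obtain ⟨U, hU⟩ := exists_sq_eq_of_expansion hL hexp
  rw [← newtonBasis_self] at hU
  have hS := eq_of_sq_eq_C_add_X_mul (newtonBasis_monic m m).ne_zero
    (natDegree_newtonBasis m m)
    (natDegree_sum_C_mul_le _ (natDegree_newtonBasis m) _ m) hU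
  obtain ⟨n, rfl⟩ : ∃ n, m = n + 1 := ⟨m - 1, by omega⟩
  obtain ⟨htop, hpred⟩ := eq_coeff_of_sum_C_mul_eq _ (natDegree_newtonBasis _) _
    (newtonBasis_monic _) hS
  rw [newtonBasis_self, coeff_one_ffall_X_sub_one] at htop
  rw [newtonBasis_self, coeff_zero_ffall_X_sub_one] at hpred
  rw [Nat.add_sub_cancel]
  exact ⟨hpred, by linear_combination htop⟩
end

section
/- Let m ≥ 1, k ≥ 2, n ≥ k−1, and let λ_1,…,λ_t be positive integers with λ_1+⋯+λ_t ≤ (m+1)(k−1)−1, such that exactly one λ_i is congruent to m modulo m+1 and all the others are divisible by m+1. Then the augmented monomial symmetric polynomial m_{λ_1,…,λ_t}(x_1,…,x_n) can be written as a linear combination of products p_{μ_1}(x)⋯p_{μ_s}(x) of power sums, where μ_1+⋯+μ_s = λ_1+⋯+λ_t, exactly one μ_j ≡ m (mod m+1), and all other μ_j are divisible by m+1; moreover this expression is unique. -/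
open MvPolynomial

/-- The power sum `p_d = x_1^d + ⋯ + x_n^d`. -/
noncomputable def psum (n d : ℕ) : MvPolynomial (Fin n) ℝ :=
  ∑ i, (X i : MvPolynomial (Fin n) ℝ) ^ d

/-- The augmented monomial symmetric polynomial
`m_{λ₁,…,λ_t}(x) = ∑_{i₁,…,i_t distinct} x_{i₁}^{λ₁} ⋯ x_{i_t}^{λ_t}`. -/
noncomputable def mSym (n t : ℕ) (lam : Fin t → ℕ) : MvPolynomial (Fin n) ℝ :=
  ∑ f ∈ Finset.univ.filter (fun f : Fin t → Fin n => Function.Injective f),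
    ∏ j, (X (f j) : MvPolynomial (Fin n) ℝ) ^ lam j

/-!
Multiplying by a power sum gives `p_a · m_λ = m_{(λ,a)} + ∑_j m_{λ + a e_j}`. Solving this for
`m_{(λ,a)}`, with `a` a part divisible by `m+1`, expresses `m_λ` by induction on the number of
parts through products of power sums `p_μ` whose parts are sums of blocks of `λ`; merging a part
divisible by `m+1` into another preserves its residue, so every such `μ` is again of the
required shape.

For uniqueness, the `p_μ` with at most `n` positive parts are linearly independent: if `μ` has a
maximal number `s` of parts, the coefficient of `x_1^{μ_1} ⋯ x_s^{μ_s}` in `p_ν` with at most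
`s` parts is nonzero only for `ν = μ`. An admissible `μ` has
`(m+1) ℓ(μ) ≤ |μ| + 1 ≤ (m+1)(k-1)`, hence at most `k - 1 ≤ n` parts.
-/
open Finset

noncomputable def psumProd (n : ℕ) (μ : Multiset ℕ) : MvPolynomial (Fin n) ℝ :=
  (μ.map (psum n)).prod

section Recurrence

variable {n t : ℕ}

lemma mSym_comp_perm (lam : Fin t → ℕ) (σ : Equiv.Perm (Fin t)) :
    mSym n t (lam ∘ σ) = mSym n t lam := by
  refine sum_nbij' (· ∘ σ.symm) (· ∘ σ) ?_ ?_ ?_ ?_ ?_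
  · intro f hf
    simp only [mem_filter, mem_univ, true_and] at hf ⊢
    exact hf.comp σ.symm.injective
  · intro f hf
    simp only [mem_filter, mem_univ, true_and] at hf ⊢
    exact hf.comp σ.injective
  · intro f _; ext j; simp
  · intro f _; ext j; simp
  · intro f _
    exact Fintype.prod_equiv σ _ _ fun j => by simp

lemma mSym_one (lam : Fin 1 → ℕ) : mSym n 1 lam = psum n (lam 0) := by
  have hinj : ∀ f : Fin 1 → Fin n, Function.Injective f := fun f _ _ _ => Subsingleton.elim _ _
  rw [mSym, filter_true_of_mem fun f _ => hinj f, _root_.psum]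
  exact Fintype.sum_equiv (Equiv.funUnique (Fin 1) (Fin n)) _ _ fun f => by simp

lemma prod_X_pow_add_single (lam : Fin t → ℕ) (g : Fin t → Fin n) (j₀ : Fin t) (a : ℕ) :
    ∏ j, (X (g j) : MvPolynomial (Fin n) ℝ) ^ (lam + Pi.single j₀ a : Fin t → ℕ) j
      = X (g j₀) ^ a * ∏ j, (X (g j) : MvPolynomial (Fin n) ℝ) ^ lam j := by
  simp only [Pi.add_apply, pow_add, prod_mul_distrib, Pi.single_apply, pow_ite, pow_zero,
    prod_ite_eq', mem_univ, if_true]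
  ring

lemma sum_filter_injective_snoc {M : Type*} [AddCommMonoid M]
    (F : (Fin (t + 1) → Fin n) → M) :
    ∑ f ∈ univ.filter (fun f : Fin (t + 1) → Fin n => Function.Injective f), F f
      = ∑ g ∈ univ.filter (fun g : Fin t → Fin n => Function.Injective g),
          ∑ i ∈ (univ.image g)ᶜ, F (Fin.snoc g i) := by
  rw [sum_sigma']
  refine sum_nbij' (fun f => ⟨Fin.init f, f (Fin.last t)⟩) (fun p => Fin.snoc p.1 p.2)
    ?_ ?_ ?_ ?_ ?_
  · intro f hf
    have hf' : Function.Injective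
        (Fin.snoc (Fin.init f) (f (Fin.last t)) : Fin (t + 1) → Fin n) := by
      rw [Fin.snoc_init_self]; simpa using hf
    simpa [Set.mem_range] using Fin.snoc_injective_iff.mp hf'
  · rintro ⟨g, i⟩ hp
    simp only [mem_sigma, mem_filter, mem_univ, true_and, mem_compl, mem_image] at hp
    simpa using Fin.snoc_injective_of_injective hp.1 (by simpa using hp.2)
  · intro f _; simp
  · rintro ⟨g, i⟩ _; simp
  · intro f _; simp

lemma psum_mul_mSym (lam : Fin t → ℕ) (a : ℕ) :
    psum n a * mSym n t lam
      = mSym n (t + 1) (Fin.snoc lam a) + ∑ j, mSym n t (lam + Pi.single j a) := by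
  have hsplit : ∀ g ∈ univ.filter (fun g : Fin t → Fin n => Function.Injective g),
      psum n a * ∏ j, (X (g j) : MvPolynomial (Fin n) ℝ) ^ lam j
        = ∑ i ∈ (univ.image g)ᶜ, X i ^ a * ∏ j, X (g j) ^ lam j
          + ∑ j₀, ∏ j, X (g j) ^ (lam + Pi.single j₀ a : Fin t → ℕ) j := by
    intro g hg
    rw [_root_.psum, sum_mul, ← sum_compl_add_sum (univ.image g),
      sum_image fun x _ y _ h => (mem_filter.mp hg).2 h]
    simp only [prod_X_pow_add_single]
  rw [mSym, mul_sum, sum_congr rfl hsplit, sum_add_distrib, sum_comm]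
  congr 1
  rw [mSym, sum_filter_injective_snoc]
  refine sum_congr rfl fun g _ => sum_congr rfl fun i _ => ?_
  rw [Fin.prod_univ_castSucc]
  simp only [Fin.snoc_castSucc, Fin.snoc_last, mul_comm]

end Recurrence

section Expansion

variable (d r : ℕ)

def IsAdmissible (S : ℕ) (μ : Multiset ℕ) : Prop :=
  (∀ b ∈ μ, 0 < b) ∧ μ.sum = S ∧ ∃ a ν, μ = a ::ₘ ν ∧ a % d = r ∧ ∀ b ∈ ν, d ∣ b

noncomputable def admissibleSpan (n S : ℕ) : Submodule ℝ (MvPolynomial (Fin n) ℝ) :=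
  Submodule.span ℝ (psumProd n '' {μ | IsAdmissible d r S μ})

variable {d r}

lemma IsAdmissible.cons {S a : ℕ} {μ : Multiset ℕ} (hμ : IsAdmissible d r S μ) (ha : 0 < a)
    (hda : d ∣ a) : IsAdmissible d r (S + a) (a ::ₘ μ) := by
  obtain ⟨hpos, hsum, b, ν, rfl, hb, hν⟩ := hμ
  refine ⟨?_, by rw [Multiset.sum_cons, hsum, add_comm], b, a ::ₘ ν, Multiset.cons_swap a b ν,
    hb, ?_⟩
  · simpa [ha] using hpos
  · simpa [hda] using hν

lemma psum_mul_mem_span_admissible {n S a : ℕ} (ha : 0 < a) (hda : d ∣ a)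
    {x : MvPolynomial (Fin n) ℝ}
    (hx : x ∈ admissibleSpan d r n S) : psum n a * x ∈ admissibleSpan d r n (S + a) := by
  have hle : admissibleSpan d r n S
      ≤ (admissibleSpan d r n (S + a)).comap (LinearMap.mulLeft ℝ (psum n a)) := by
    rw [admissibleSpan, Submodule.span_le]
    rintro _ ⟨μ, hμ, rfl⟩
    exact Submodule.subset_span ⟨a ::ₘ μ, hμ.cons ha hda, by simp [psumProd]⟩
  exact hle hx

variable (d r) in
lemma mSym_mem_span_admissible_of_mod_zero (n : ℕ) : ∀ (t : ℕ) (lam : Fin (t + 1) → ℕ),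
    (∀ j, 0 < lam j) → lam 0 % d = r → (∀ i ≠ 0, d ∣ lam i) →
    mSym n (t + 1) lam ∈ admissibleSpan d r n (∑ j, lam j)
  | 0, lam, hpos, h0, _ => by
    rw [mSym_one]
    exact Submodule.subset_span
      ⟨{lam 0}, ⟨by simpa using hpos 0, by simp, lam 0, 0, rfl, h0, by simp⟩, by simp [psumProd]⟩
  | t + 1, lam, hpos, h0, hdvd => by
    set a := lam (Fin.last (t + 1))
    set lam' := Fin.init lam
    have hda : d ∣ a := hdvd _ (Fin.last_pos.ne')
    have hdvd_single : ∀ j i, d ∣ (Pi.single j a : Fin (t + 1) → ℕ) i := fun j i => by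
      rw [Pi.single_apply]; split_ifs <;> simp [hda]
    have hsum : ∑ j, lam j = ∑ j, lam' j + a := Fin.sum_univ_castSucc lam
    have hdvd' : ∀ i ≠ 0, d ∣ lam' i := fun i hi => hdvd _ (by simpa using hi)
    have hmerge : ∀ j,
        mSym n (t + 1) (lam' + Pi.single j a) ∈ admissibleSpan d r n (∑ j, lam' j + a) := by
      intro j
      have hsum_single :
          ∑ i, (lam' + Pi.single j a : Fin (t + 1) → ℕ) i = ∑ i, lam' i + a := by
        simp [sum_add_distrib]
      rw [← hsum_single]
      refine mSym_mem_span_admissible_of_mod_zero n t _ (fun i => ?_) ?_ ?_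
      · exact Nat.add_pos_left (hpos _) _
      · obtain ⟨q, hq⟩ := hdvd_single j 0
        rw [Pi.add_apply, hq, Nat.add_mul_mod_self_left]
        exact h0
      · exact fun i hi => dvd_add (hdvd' i hi) (hdvd_single j i)
    have hrec : mSym n (t + 2) lam
        = psum n a * mSym n (t + 1) lam' - ∑ j, mSym n (t + 1) (lam' + Pi.single j a) := by
      rw [psum_mul_mSym, Fin.snoc_init_self, add_sub_cancel_right]
    rw [hrec, hsum]
    exact sub_mem
      (psum_mul_mem_span_admissible (hpos _) hda
        (mSym_mem_span_admissible_of_mod_zero n t lam' (fun j => hpos _) h0 hdvd'))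
      (sum_mem fun j _ => hmerge j)

lemma mSym_mem_span_admissible (n : ℕ) {t : ℕ} (lam : Fin t → ℕ) (hpos : ∀ j, 0 < lam j)
    (i₀ : Fin t) (hi₀ : lam i₀ % d = r) (hdvd : ∀ i ≠ i₀, d ∣ lam i) :
    mSym n t lam ∈ admissibleSpan d r n (∑ j, lam j) := by
  cases t with
  | zero => exact i₀.elim0
  | succ t =>
    let σ := Equiv.swap 0 i₀
    have hσ : σ 0 = i₀ := Equiv.swap_apply_left 0 i₀
    rw [← mSym_comp_perm lam σ, ← Equiv.sum_comp σ lam]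
    refine mSym_mem_span_admissible_of_mod_zero d r n t (lam ∘ σ) (fun j => hpos _)
      (by simpa [hσ] using hi₀) fun i hi => hdvd _ fun h => hi (σ.injective (h.trans hσ.symm))

end Expansion

section Independence

def exponentMultiset {σ : Type*} (α : σ →₀ ℕ) : Multiset ℕ :=
  α.support.val.map α

lemma card_exponentMultiset {σ : Type*} (α : σ →₀ ℕ) :
    Multiset.card (exponentMultiset α) = #α.support := by
  simp [exponentMultiset]

variable {n s : ℕ}

noncomputable def monomialDegree (l : Fin s → ℕ) (g : Fin s → Fin n) : Fin n →₀ ℕ :=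
  ∑ j, Finsupp.single (g j) (l j)

lemma coeff_prod_psum (l : Fin s → ℕ) (α : Fin n →₀ ℕ) :
    coeff α (∏ j, psum n (l j)) = #{g : Fin s → Fin n | monomialDegree l g = α} := by
  have hprod : ∀ g : Fin s → Fin n,
      ∏ j, (X (g j) : MvPolynomial (Fin n) ℝ) ^ l j = monomial (monomialDegree l g) 1 := by
    intro g
    rw [monomialDegree, monomial_sum_one]
    exact prod_congr rfl fun j _ => X_pow_eq_monomial
  simp only [_root_.psum, prod_univ_sum, Fintype.piFinset_univ, hprod, coeff_sum, coeff_monomial]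
  rw [sum_boole]

lemma support_monomialDegree_subset (l : Fin s → ℕ) (g : Fin s → Fin n) :
    (monomialDegree l g).support ⊆ univ.image g := by
  refine Finsupp.support_finsetSum.trans fun i hi => ?_
  obtain ⟨j, -, hj⟩ := mem_biUnion.mp hi
  rw [mem_singleton.mp (Finsupp.support_single_subset hj)]
  exact mem_image_of_mem g (mem_univ j)

lemma monomialDegree_apply_of_injective (l : Fin s → ℕ) {g : Fin s → Fin n}
    (hg : Function.Injective g) (j : Fin s) : monomialDegree l g (g j) = l j := by
  simp [monomialDegree, Finsupp.finsetSum_apply, Finsupp.single_apply, hg.eq_iff]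

lemma exponentMultiset_monomialDegree {l : Fin s → ℕ} {g : Fin s → Fin n}
    (hl : ∀ j, 0 < l j) (hg : Function.Injective g) :
    exponentMultiset (monomialDegree l g) = ↑(List.ofFn l) := by
  have hsupp : (monomialDegree l g).support = univ.image g := by
    refine (support_monomialDegree_subset l g).antisymm fun i hi => ?_
    obtain ⟨j, -, rfl⟩ := mem_image.mp hi
    rw [Finsupp.mem_support_iff, monomialDegree_apply_of_injective l hg]
    exact (hl j).ne'
  rw [exponentMultiset, hsupp, image_val_of_injOn hg.injOn, Multiset.map_map,
    ← Fin.univ_val_map]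
  exact Multiset.map_congr rfl fun j _ => monomialDegree_apply_of_injective l hg j

lemma psumProd_ofFn (l : Fin s → ℕ) : psumProd n ↑(List.ofFn l) = ∏ j, psum n (l j) := by
  rw [psumProd, Multiset.map_coe, Multiset.prod_coe, List.map_ofFn, List.prod_ofFn]
  rfl

lemma Multiset.exists_eq_coe_ofFn {α : Type*} (μ : Multiset α) :
    ∃ (s : ℕ) (l : Fin s → α), μ = ↑(List.ofFn l) :=
  ⟨_, μ.toList.get, by rw [List.ofFn_get, Multiset.coe_toList]⟩

lemma exponentMultiset_eq_of_coeff_psumProd_ne_zero {μ : Multiset ℕ} (hμ : ∀ b ∈ μ, 0 < b)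
    {α : Fin n →₀ ℕ} (hcard : Multiset.card μ ≤ #α.support)
    (h : coeff α (psumProd n μ) ≠ 0) :
    exponentMultiset α = μ := by
  obtain ⟨s, l, rfl⟩ := μ.exists_eq_coe_ofFn
  simp only [Multiset.mem_coe, List.mem_ofFn, forall_exists_index, forall_apply_eq_imp_iff]
    at hμ
  simp only [Multiset.coe_card, List.length_ofFn] at hcard
  rw [psumProd_ofFn, coeff_prod_psum, Nat.cast_ne_zero, card_ne_zero] at h
  obtain ⟨g, hg⟩ := h
  rw [mem_filter] at hg
  have himage : #(univ.image g) = #(univ : Finset (Fin s)) := by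
    refine le_antisymm card_image_le ?_
    rw [card_univ, Fintype.card_fin]
    exact hcard.trans (hg.2 ▸ card_le_card (support_monomialDegree_subset l g))
  have hinj : Function.Injective g := by
    simpa using card_image_iff.mp himage
  rw [← hg.2, exponentMultiset_monomialDegree hμ hinj]

lemma exists_coeff_psumProd_ne_zero {μ : Multiset ℕ} (hμ : ∀ b ∈ μ, 0 < b)
    (hn : Multiset.card μ ≤ n) :
    ∃ α : Fin n →₀ ℕ, exponentMultiset α = μ ∧ coeff α (psumProd n μ) ≠ 0 := by
  obtain ⟨s, l, rfl⟩ := μ.exists_eq_coe_ofFn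
  simp only [Multiset.mem_coe, List.mem_ofFn, forall_exists_index, forall_apply_eq_imp_iff]
    at hμ
  simp only [Multiset.coe_card, List.length_ofFn] at hn
  have hg : Function.Injective (Fin.castLE hn) := Fin.castLE_injective hn
  refine ⟨monomialDegree l (Fin.castLE hn), exponentMultiset_monomialDegree hμ hg, ?_⟩
  rw [psumProd_ofFn, coeff_prod_psum, Nat.cast_ne_zero, card_ne_zero]
  exact ⟨Fin.castLE hn, by simp⟩

theorem linearIndepOn_psumProd (n : ℕ) :
    LinearIndepOn ℝ (psumProd n) {μ | (∀ b ∈ μ, 0 < b) ∧ Multiset.card μ ≤ n} := by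
  rw [linearIndepOn_iff]
  intro c hc hzero
  by_contra hne
  obtain ⟨μ₀, hμ₀, hmax⟩ :=
    exists_max_image c.support Multiset.card (Finsupp.support_nonempty_iff.mpr hne)
  obtain ⟨hpos₀, hcard₀⟩ := hc hμ₀
  obtain ⟨α, hα, hcoeff⟩ := exists_coeff_psumProd_ne_zero hpos₀ hcard₀
  have hcoeff_zero := congrArg (coeff α) hzero
  rw [Finsupp.linearCombination_apply, Finsupp.sum, coeff_sum, coeff_zero,
    sum_eq_single_of_mem μ₀ hμ₀ fun ν hν hνμ₀ => ?_, coeff_smul, smul_eq_mul] at hcoeff_zero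
  · exact mul_ne_zero (Finsupp.mem_support_iff.mp hμ₀) hcoeff hcoeff_zero
  · rw [coeff_smul, smul_eq_mul, mul_eq_zero]
    refine Or.inr (by_contra fun h => hνμ₀ ?_)
    rw [← exponentMultiset_eq_of_coeff_psumProd_ne_zero (hc hν).1
      (by rw [← card_exponentMultiset, hα]; exact hmax ν hν) h, hα]

end Independence

lemma IsAdmissible.succ_mul_card_le {m S : ℕ} {μ : Multiset ℕ}
    (h : IsAdmissible (m + 1) m S μ) :
    (m + 1) * Multiset.card μ ≤ S + 1 := by
  obtain ⟨hpos, rfl, a, ν, rfl, ha, hν⟩ := h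
  have hle_a : m ≤ a := ha ▸ Nat.mod_le a (m + 1)
  have hle_ν : Multiset.card ν • (m + 1) ≤ ν.sum :=
    Multiset.card_nsmul_le_sum fun b hb =>
      Nat.le_of_dvd (hpos b (Multiset.mem_cons_of_mem hb)) (hν b hb)
  rw [smul_eq_mul] at hle_ν
  rw [Multiset.card_cons, Multiset.sum_cons]
  linarith

theorem stmt19_general (m k n t : ℕ) (hn : k - 1 ≤ n)
    (lam : Fin t → ℕ) (hpos : ∀ j, 0 < lam j)
    (hsum : ∑ j, lam j ≤ (m + 1) * (k - 1) - 1)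
    (hcong : ∃ i₀ : Fin t, lam i₀ % (m + 1) = m ∧ ∀ i, i ≠ i₀ → (m + 1) ∣ lam i) :
    ∃! c : Multiset ℕ →₀ ℝ,
      (∀ μ ∈ c.support, (∀ b ∈ μ, 0 < b) ∧ μ.sum = ∑ j, lam j ∧
        ∃ (a : ℕ) (ν : Multiset ℕ), μ = a ::ₘ ν ∧ a % (m + 1) = m ∧ ∀ b ∈ ν, (m + 1) ∣ b) ∧
      mSym n t lam = c.sum (fun μ coef => coef • (μ.map (psum n)).prod) := by
  obtain ⟨i₀, hi₀, hdvd⟩ := hcong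
  have hsum_pos : 0 < ∑ j, lam j := (hpos i₀).trans_le (single_le_sum (by simp) (mem_univ i₀))
  have hadm : {μ | IsAdmissible (m + 1) m (∑ j, lam j) μ}
      ⊆ {μ | (∀ b ∈ μ, 0 < b) ∧ Multiset.card μ ≤ n} := fun μ hμ => by
    refine ⟨hμ.1, le_trans ?_ hn⟩
    refine Nat.le_of_mul_le_mul_left ((hμ.succ_mul_card_le).trans ?_) m.succ_pos
    omega
  obtain ⟨c, hc, hc_eq⟩ := (Finsupp.mem_span_image_iff_linearCombination ℝ).mp
    (mSym_mem_span_admissible n lam hpos i₀ hi₀ hdvd)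
  refine ⟨c, ⟨(Finsupp.mem_supported ℝ c).mp hc, hc_eq.symm⟩, fun c' ⟨hc', hc'_eq⟩ => ?_⟩
  exact linearIndepOn_iffₛ.mp ((linearIndepOn_psumProd n).mono hadm) c'
    ((Finsupp.mem_supported ℝ c').mpr hc') c hc (hc'_eq.symm.trans hc_eq.symm)

/-- if `λ₁+⋯+λ_t ≤ (m+1)(k-1)-1` with exactly one `λ_i ≡ m (mod m+1)`
and all the others divisible by `m+1`, then `m_{λ₁,…,λ_t}` has a unique expansion as a
linear combination of products of power sums `p_{μ₁}⋯p_{μ_s}` over multisets `μ` of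
positive integers with `μ.sum = λ₁+⋯+λ_t`, exactly one `μ_j ≡ m (mod m+1)`, and all
other `μ_j` divisible by `m+1`. -/
theorem stmt19 (m k n t : ℕ) (hm : 1 ≤ m) (hk : 2 ≤ k) (hn : k - 1 ≤ n)
    (lam : Fin t → ℕ) (hpos : ∀ j, 0 < lam j)
    (hsum : ∑ j, lam j ≤ (m + 1) * (k - 1) - 1)
    (hcong : ∃ i₀ : Fin t, lam i₀ % (m + 1) = m ∧ ∀ i, i ≠ i₀ → (m + 1) ∣ lam i) :
    ∃! c : Multiset ℕ →₀ ℝ,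
      (∀ μ ∈ c.support, (∀ b ∈ μ, 0 < b) ∧ μ.sum = ∑ j, lam j ∧
        ∃ (a : ℕ) (ν : Multiset ℕ), μ = a ::ₘ ν ∧ a % (m + 1) = m ∧ ∀ b ∈ ν, (m + 1) ∣ b) ∧
      mSym n t lam = c.sum (fun μ coef => coef • (μ.map (psum n)).prod) :=
  stmt19_general m k n t hn lam hpos hsum hcong
end
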